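/- Let Φ be a unital channel with Kraus operators {K_i} in canonical (mutually orthogonal under Hilbert–Schmidt inner product) form, with d-dimensional input and d_o-dimensional output. Then I(Φ) = H(Φ(π_d)) − H(ω_Φ) = log d_o − H(p), where p_i = tr(K_i†K_i)/d and H(p) = −Σ_i p_i log p_i is the Shannon entropy. -/

import Mathlib

open Matrix BigOperators Kronecker
open scoped Classical ComplexOrder

/-- The positive semidefinite square root of a positive semidefinite matrix
(the definition `Matrix.PosSemidef.sqrt` of the older Mathlib, removed since). -/
noncomputable def Matrix.PosSemidef.sqrt {n 𝕜 : Type*} [Fintype n] [DecidableEq n] [RCLike 𝕜]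
    {A : Matrix n n 𝕜} (hA : A.PosSemidef) : Matrix n n 𝕜 :=
  hA.1.eigenvectorUnitary.1 * Matrix.diagonal ((↑) ∘ (Real.sqrt ∘ hA.1.eigenvalues)) *
    (star hA.1.eigenvectorUnitary : Matrix n n 𝕜)

namespace QCap

/-- Trace norm: `‖A‖₁ = tr √(AᴴA)`. -/
noncomputable def traceNorm {ι : Type*} [Fintype ι] [DecidableEq ι] (A : Matrix ι ι ℂ) : ℝ :=
  ((Matrix.posSemidef_conjTranspose_mul_self A).sqrt.trace).re

/-- Trace distance `D_t(ρ,σ) = ‖ρ-σ‖₁ / 2`. -/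
noncomputable def traceDist {ι : Type*} [Fintype ι] [DecidableEq ι] (ρ σ : Matrix ι ι ℂ) : ℝ :=
  traceNorm (ρ - σ) / 2

/-- von Neumann entropy via eigenvalues, `H(ρ) = -∑ λᵢ log λᵢ`. -/
noncomputable def vnEntropy {ι : Type*} [Fintype ι] [DecidableEq ι] (ρ : Matrix ι ι ℂ) : ℝ :=
  if h : ρ.IsHermitian then ∑ i, Real.negMulLog (h.eigenvalues i) else 0

/-- A density operator: positive semidefinite with unit trace. -/
def IsDensity {ι : Type*} [Fintype ι] (ρ : Matrix ι ι ℂ) : Prop :=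
  ρ.PosSemidef ∧ ρ.trace = 1

/-- Kraus condition `∑ Kᵢᴴ Kᵢ = 1` (trace preservation for a CP map). -/
def IsKraus {ι κ α : Type*} [Fintype ι] [DecidableEq ι] [Fintype κ] [Fintype α]
    (K : κ → Matrix α ι ℂ) : Prop :=
  ∑ k, (K k)ᴴ * K k = 1

/-- Channel action `Φ(ρ) = ∑ Kᵢ ρ Kᵢᴴ`. -/
noncomputable def channelApply {ι κ α : Type*} [Fintype ι] [Fintype κ]
    (K : κ → Matrix α ι ℂ) (ρ : Matrix ι ι ℂ) : Matrix α α ℂ :=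
  ∑ k, K k * ρ * (K k)ᴴ

/-- Choi state `ω_Φ = (Φ ⊗ id)(|ω⟩⟨ω|)` with `|ω⟩ = (1/√d) ∑ᵢ |ii⟩`. -/
noncomputable def choiState {ι κ α : Type*} [Fintype ι] [DecidableEq ι] [Fintype κ]
    (K : κ → Matrix α ι ℂ) : Matrix (α × ι) (α × ι) ℂ :=
  (Fintype.card ι : ℂ)⁻¹ •
    ∑ i : ι, ∑ j : ι,
      (channelApply K (Matrix.single i j 1)) ⊗ₖ (Matrix.single i j 1)

/-- Partial trace over the first tensor factor. -/
noncomputable def ptraceFst {α β : Type*} [Fintype α]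
    (M : Matrix (α × β) (α × β) ℂ) : Matrix β β ℂ :=
  Matrix.of fun i j => ∑ a, M (a, i) (a, j)

/-- Partial trace over the second tensor factor. -/
noncomputable def ptraceSnd {α β : Type*} [Fintype β]
    (M : Matrix (α × β) (α × β) ℂ) : Matrix α α ℂ :=
  Matrix.of fun a b => ∑ i, M (a, i) (b, i)

/-- Fidelity `F(ρ,σ) = (tr √(√ρ σ √ρ))²`. -/
noncomputable def fidelity {ι : Type*} [Fintype ι] [DecidableEq ι] (ρ σ : Matrix ι ι ℂ) : ℝ :=
  if hρ : ρ.PosSemidef then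
    if h : (hρ.sqrt * σ * hρ.sqrt).PosSemidef then ((h.sqrt.trace).re) ^ 2 else 0
  else 0

/-- Coherent information of the channel at the maximally mixed input:
`I(Φ) = H(Φ(π_d)) - H(ω_Φ)`. -/
noncomputable def cohInfo {ι κ α : Type*} [Fintype ι] [DecidableEq ι] [Fintype κ]
    [Fintype α] [DecidableEq α] (K : κ → Matrix α ι ℂ) : ℝ :=
  vnEntropy (channelApply K ((Fintype.card ι : ℂ)⁻¹ • (1 : Matrix ι ι ℂ)))
    - vnEntropy (choiState K)

end QCap

/-!
Let `W` be the matrix whose `k`-th column is the vectorised Kraus operator `K k` divided by `√d`.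
Then `ω_Φ = W Wᴴ`, and `W Wᴴ`, `Wᴴ W` have the same nonzero eigenvalues (Sylvester), while zero
eigenvalues do not contribute to the entropy. Now `Wᴴ W` is the Gram matrix `(tr (K_kᴴ K_l) / d)`,
which orthogonality makes diagonal with entries `p_k`; hence `H(ω_Φ) = H(p)`. Unitality makes
`Φ(π_d)` maximally mixed, of entropy `log d_o`.
-/

open Polynomial

lemma Matrix.trace_conjTranspose_mul_eq_sum {m n R : Type*} [Fintype m] [Fintype n]
    [NonUnitalNonAssocSemiring R] [Star R] (A B : Matrix m n R) :
    (Aᴴ * B).trace = ∑ x : m × n, star (A x.1 x.2) * B x.1 x.2 := by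
  simp [Matrix.trace, Matrix.mul_apply, Fintype.sum_prod_type, Finset.sum_comm (γ := m)]

lemma Matrix.ofReal_re_trace_conjTranspose_mul_self {m n : Type*} [Fintype m] [Fintype n]
    (A : Matrix m n ℂ) : (((Aᴴ * A).trace.re : ℝ) : ℂ) = (Aᴴ * A).trace :=
  Complex.conj_eq_iff_re.mp <| by
    rw [← Complex.star_def, ← trace_conjTranspose, (isHermitian_conjTranspose_mul_self A).eq]

namespace QCap

lemma vnEntropy_eq_sum_roots_charpoly {n : Type*} [Fintype n] [DecidableEq n]
    {A : Matrix n n ℂ} (hA : A.IsHermitian) :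
    vnEntropy A = (A.charpoly.roots.map fun z => Real.negMulLog z.re).sum := by
  simp [vnEntropy, dif_pos hA, hA.roots_charpoly_eq_eigenvalues, Finset.sum_map_val]

lemma vnEntropy_mul_conjTranspose_comm {m n : Type*} [Fintype m] [DecidableEq m]
    [Fintype n] [DecidableEq n] (W : Matrix m n ℂ) :
    vnEntropy (W * Wᴴ) = vnEntropy (Wᴴ * W) := by
  have hroots := congrArg roots (charpoly_mul_comm' W Wᴴ)
  rw [roots_mul (mul_ne_zero (pow_ne_zero _ X_ne_zero) (charpoly_monic _).ne_zero),
    roots_mul (mul_ne_zero (pow_ne_zero _ X_ne_zero) (charpoly_monic _).ne_zero),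
    roots_X_pow, roots_X_pow] at hroots
  have hsum := congrArg (fun s : Multiset ℂ => (s.map fun z => Real.negMulLog z.re).sum) hroots
  simpa [vnEntropy_eq_sum_roots_charpoly (isHermitian_mul_conjTranspose_self W),
    vnEntropy_eq_sum_roots_charpoly (isHermitian_conjTranspose_mul_self W),
    Multiset.nsmul_singleton, Multiset.map_replicate] using hsum

lemma vnEntropy_diagonal_ofReal {n : Type*} [Fintype n] [DecidableEq n] (q : n → ℝ) :
    vnEntropy (diagonal fun i => (q i : ℂ)) = ∑ i, Real.negMulLog (q i) := by
  have hq : (diagonal fun i => (q i : ℂ)).IsHermitian :=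
    isHermitian_diagonal_of_self_adjoint _ (by ext; simp)
  rw [vnEntropy_eq_sum_roots_charpoly hq, charpoly_diagonal, roots_prod]
  · simp [Finset.sum_map_val]
  · exact Finset.prod_ne_zero_iff.mpr fun i _ => X_sub_C_ne_zero _

lemma vnEntropy_maximallyMixed {n : Type*} [Fintype n] [DecidableEq n] :
    vnEntropy ((Fintype.card n : ℂ)⁻¹ • (1 : Matrix n n ℂ)) = Real.log (Fintype.card n) := by
  have hdiag : (Fintype.card n : ℂ)⁻¹ • (1 : Matrix n n ℂ) =
      diagonal fun _ => (((Fintype.card n : ℝ)⁻¹ : ℝ) : ℂ) := by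
    rw [smul_one_eq_diagonal]; simp
  rw [hdiag, vnEntropy_diagonal_ofReal, Finset.sum_const, Finset.card_univ, nsmul_eq_mul,
    Real.negMulLog, Real.log_inv]
  rcases eq_or_ne (Fintype.card n : ℝ) 0 with h | h
  · simp [h]
  · field_simp

variable {ι κ α : Type*} [Fintype ι]

lemma channelApply_single_apply [Fintype κ] [DecidableEq ι] (K : κ → Matrix α ι ℂ) (i j : ι)
    (a b : α) :
    channelApply K (single i j 1) a b = ∑ k, K k a i * star (K k b j) := by
  simp [channelApply, Matrix.sum_apply, Matrix.mul_apply, Matrix.single_apply, ite_and]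

lemma choiState_apply [Fintype κ] [DecidableEq ι] (K : κ → Matrix α ι ℂ) (a b : α) (i j : ι) :
    choiState K (a, i) (b, j) = (Fintype.card ι : ℂ)⁻¹ * ∑ k, K k a i * star (K k b j) := by
  simp [choiState, Matrix.sum_apply, Matrix.single_apply, ite_and, channelApply_single_apply]

noncomputable def choiFactor (K : κ → Matrix α ι ℂ) : Matrix (α × ι) κ ℂ :=
  of fun x k => (Real.sqrt (Fintype.card ι) : ℂ)⁻¹ * K k x.1 x.2

lemma choiFactor_mul_star_choiFactor (K : κ → Matrix α ι ℂ) (x y : α × ι) (k l : κ) :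
    choiFactor K x k * star (choiFactor K y l) =
      (Fintype.card ι : ℂ)⁻¹ * (K k x.1 x.2 * star (K l y.1 y.2)) := by
  have hsq : ((Real.sqrt (Fintype.card ι) : ℂ))⁻¹ * (Real.sqrt (Fintype.card ι) : ℂ)⁻¹ =
      (Fintype.card ι : ℂ)⁻¹ := by
    rw [← mul_inv, ← Complex.ofReal_mul, Real.mul_self_sqrt (Nat.cast_nonneg _)]; simp
  simp only [choiFactor, of_apply, star_mul', star_inv₀, Complex.star_def, Complex.conj_ofReal]
  rw [← hsq]; ring

lemma choiState_eq_choiFactor_mul_conjTranspose [Fintype κ] [DecidableEq ι]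
    (K : κ → Matrix α ι ℂ) :
    choiState K = choiFactor K * (choiFactor K)ᴴ := by
  ext ⟨a, i⟩ ⟨b, j⟩
  simp only [choiState_apply, mul_apply, conjTranspose_apply, choiFactor_mul_star_choiFactor,
    Finset.mul_sum]

lemma conjTranspose_choiFactor_mul_self [Fintype κ] [Fintype α] (K : κ → Matrix α ι ℂ) :
    (choiFactor K)ᴴ * choiFactor K =
      (Fintype.card ι : ℂ)⁻¹ • of fun k l => ((K k)ᴴ * K l).trace := by
  ext k l
  simp only [mul_apply, conjTranspose_apply, mul_comm (star _), choiFactor_mul_star_choiFactor,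
    Matrix.smul_apply, of_apply, trace_conjTranspose_mul_eq_sum, smul_eq_mul, Finset.mul_sum]

lemma conjTranspose_choiFactor_mul_self_of_orthogonal [Fintype κ] [DecidableEq κ] [Fintype α]
    (K : κ → Matrix α ι ℂ) (horth : ∀ k l, k ≠ l → ((K k)ᴴ * K l).trace = 0) :
    (choiFactor K)ᴴ * choiFactor K =
      diagonal fun k => ((((K k)ᴴ * K k).trace.re / Fintype.card ι : ℝ) : ℂ) := by
  rw [conjTranspose_choiFactor_mul_self]
  ext k l
  rcases eq_or_ne k l with rfl | hkl
  · simp [ofReal_re_trace_conjTranspose_mul_self, div_eq_inv_mul]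
  · simp [horth k l hkl, hkl]

lemma vnEntropy_choiState_of_orthogonal [Fintype κ] [DecidableEq ι] [Fintype α] [DecidableEq α]
    (K : κ → Matrix α ι ℂ) (horth : ∀ k l, k ≠ l → ((K k)ᴴ * K l).trace = 0) :
    vnEntropy (choiState K) =
      ∑ k, Real.negMulLog ((((K k)ᴴ * K k).trace).re / Fintype.card ι) := by
  rw [choiState_eq_choiFactor_mul_conjTranspose, vnEntropy_mul_conjTranspose_comm,
    conjTranspose_choiFactor_mul_self_of_orthogonal K horth, vnEntropy_diagonal_ofReal]

end QCap

open QCap Matrix in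
theorem cohInfo_unital_canonical_general {ι κ α : Type*} [Fintype ι] [DecidableEq ι]
    [Fintype κ] [Fintype α] [DecidableEq α]
    (K : κ → Matrix α ι ℂ)
    (hU : channelApply K ((Fintype.card ι : ℂ)⁻¹ • (1 : Matrix ι ι ℂ)) =
      (Fintype.card α : ℂ)⁻¹ • (1 : Matrix α α ℂ))
    (horth : ∀ i j, i ≠ j → ((K i)ᴴ * K j).trace = 0) :
    cohInfo K = Real.log (Fintype.card α) -
      ∑ i, Real.negMulLog ((((K i)ᴴ * K i).trace).re / (Fintype.card ι : ℝ)) := by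
  rw [cohInfo, hU, vnEntropy_maximallyMixed, vnEntropy_choiState_of_orthogonal K horth]

open QCap Matrix in
/-- for a unital channel with mutually orthogonal Kraus operators,
`I(Φ) = log d_o − H(p)` with `pᵢ = tr(Kᵢ†Kᵢ)/d`. -/
theorem cohInfo_unital_canonical {ι κ α : Type*} [Fintype ι] [DecidableEq ι] [Nonempty ι]
    [Fintype κ] [Fintype α] [DecidableEq α] [Nonempty α]
    (K : κ → Matrix α ι ℂ) (hK : IsKraus K)
    (hU : channelApply K ((Fintype.card ι : ℂ)⁻¹ • (1 : Matrix ι ι ℂ)) =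
      (Fintype.card α : ℂ)⁻¹ • (1 : Matrix α α ℂ))
    (horth : ∀ i j, i ≠ j → ((K i)ᴴ * K j).trace = 0) :
    cohInfo K = Real.log (Fintype.card α) -
      ∑ i, Real.negMulLog ((((K i)ᴴ * K i).trace).re / (Fintype.card ι : ℝ)) :=
  cohInfo_unital_canonical_general K hU horth
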